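/- Under the hypotheses ‖∇h^l(x)‖ ≥ L₁, ‖∇²h^l(w,w')‖ ≤ L₂‖w‖‖w'‖, ‖∇³h^l(w,w,w)‖ ≤ L₃‖w‖³, pairwise-orthogonal gradients ∇h^l on M, and ‖Π(u,v)‖ ≤ C₂‖u‖‖v‖: for any tangent vector field v along a geodesic with tangent v, the tangential component of ∇_v Π(v,v) satisfies ‖(∇_v Π(v,v))^⊤‖ ≤ C₂²‖v‖³. -/

import Mathlib

open scoped RealInnerProductSpace



lemma kl_vanish {E : Type*} [NormedAddCommGroup E] [NormedSpace ℝ E] [CompleteSpace E] {m : ℕ}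
    (f : E → Fin m → ℝ) (hf : ContDiff ℝ (⊤ : ℕ∞) f) {x : E} (hfx : f x = 0)
    (hsurj : Function.Surjective (fderiv ℝ f x))
    {ξ : E} (hξ : fderiv ℝ f x ξ = 0)
    (g : E → ℝ) (hg : DifferentiableAt ℝ g x) (hg0 : ∀ y, f y = 0 → g y = 0) :
    fderiv ℝ g x ξ = 0 := by
  set f' := fderiv ℝ f x with hf'def
  have hstrict : HasStrictFDerivAt f f' x := hf.contDiffAt.hasStrictFDerivAt (by simp)
  have hrange : f'.range = ⊤ := LinearMap.range_eq_top.2 (by exact hsurj)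
  set ψ : f'.ker → E := hstrict.implicitFunction f f' hrange (f x) with hψdef
  have hψ0 : ψ 0 = x := hstrict.implicitFunction_apply_image hrange
  have hψstrict : HasStrictFDerivAt ψ f'.ker.subtypeL 0 :=
    hstrict.to_implicitFunction hrange
  have hmap := hstrict.map_implicitFunction_eq hrange
  have htend : Filter.Tendsto (fun y : f'.ker => ((f x), y)) (nhds 0)
      (nhds (f x, (0 : f'.ker))) :=
    Filter.Tendsto.prodMk_nhds tendsto_const_nhds Filter.tendsto_id
  have hev : ∀ᶠ y : f'.ker in nhds 0, f (ψ y) = f x := htend.eventually hmap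
  have hGzero : (fun y => g (ψ y)) =ᶠ[nhds (0 : f'.ker)] fun _ => 0 :=
    hev.mono fun y hy => hg0 _ (hy.trans hfx)
  have hψdiff : DifferentiableAt ℝ ψ 0 := hψstrict.differentiableAt
  have hgψ : fderiv ℝ (fun y => g (ψ y)) 0 =
      (fderiv ℝ g x).comp (f'.ker.subtypeL) := by
    have := fderiv_comp (0 : f'.ker) (by rwa [hψ0]) hψdiff
    rw [Function.comp_def] at this
    rw [this, hψ0, hψstrict.hasFDerivAt.fderiv]
  have hzero : fderiv ℝ (fun y => g (ψ y)) 0 = 0 := by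
    rw [hGzero.fderiv_eq, fderiv_fun_const]
    rfl
  have hξker : ξ ∈ f'.ker := LinearMap.mem_ker.2 hξ
  have := congrArg (fun (L : f'.ker →L[ℝ] ℝ) => L ⟨ξ, hξker⟩) (hgψ.symm.trans hzero)
  simpa using this


lemma orth_expand {E : Type*} [NormedAddCommGroup E] [InnerProductSpace ℝ E] {m : ℕ}
    (N : Fin m → E) (horth : ∀ l l', l ≠ l' → ⟪N l, N l'⟫ = 0)
    (hne : ∀ l, ⟪N l, N l⟫ ≠ 0) {z : E} (hz : z ∈ Submodule.span ℝ (Set.range N)) :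
    z = ∑ l, (⟪z, N l⟫ / ⟪N l, N l⟫) • N l := by
  obtain ⟨c, hc⟩ := (Finsupp.mem_span_range_iff_exists_finsupp).1 hz
  rw [Finsupp.sum_fintype] at hc
  · have hinner : ∀ k, ⟪z, N k⟫ = c k * ⟪N k, N k⟫ := by
      intro k
      rw [← hc, sum_inner]
      rw [Finset.sum_eq_single k]
      · rw [real_inner_smul_left]
      · intro l _ hlk
        rw [real_inner_smul_left, horth l k hlk, mul_zero]
      · intro hk; exact absurd (Finset.mem_univ k) hk
    have hco : ∀ l, (⟪z, N l⟫ / ⟪N l, N l⟫) = c l := by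
      intro l; rw [hinner l, mul_div_assoc, div_self (hne l), mul_one]
    calc z = ∑ i, c i • N i := hc.symm
      _ = ∑ l, (⟪z, N l⟫ / ⟪N l, N l⟫) • N l :=
        Finset.sum_congr rfl fun l _ => by rw [hco l]
  · intro i; exact zero_smul ℝ (N i)


lemma tangential_bound {E : Type*} [NormedAddCommGroup E] [InnerProductSpace ℝ E]
    [FiniteDimensional ℝ E] {m : ℕ} (N : Fin m → E → E) (M : Set E) {x : E} (hx : x ∈ M)
    (hNdiff : ∀ l, Differentiable ℝ (N l))
    (hsymm : ∀ l (a b : E), ⟪fderiv ℝ (N l) x a, b⟫ = ⟪fderiv ℝ (N l) x b, a⟫)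
    (horth : ∀ y ∈ M, ∀ l l', l ≠ l' → ⟪N l y, N l' y⟫ = 0)
    (hNne : ∀ y ∈ M, ∀ l, ⟪N l y, N l y⟫ ≠ 0)
    (v : E → E) (hvdiff : Differentiable ℝ v) (hvt : ∀ y l, ⟪v y, N l y⟫ = 0)
    (kl : ∀ g : E → ℝ, DifferentiableAt ℝ g x → (∀ y ∈ M, g y = 0) → fderiv ℝ g x (v x) = 0)
    (S : E → E) (hSdiff : Differentiable ℝ S)
    (hSmem : ∀ y ∈ M, S y ∈ Submodule.span ℝ (Set.range fun l => N l y))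
    (T : E)
    (hT : T = fderiv ℝ S x (v x) -
      (Submodule.orthogonalProjection (Submodule.span ℝ (Set.range fun l => N l x))
        (fderiv ℝ S x (v x)) : E))
    (C₂ : ℝ)
    (hBnorm : ‖(Submodule.orthogonalProjection (Submodule.span ℝ (Set.range fun l => N l x))
        (fderiv ℝ v x T) : E)‖ ≤ C₂ * ‖T‖ * ‖v x‖)
    (hSnorm : ‖S x‖ ≤ C₂ * ‖v x‖ * ‖v x‖) :
    ‖T‖ ≤ C₂ ^ 2 * ‖v x‖ ^ 3 := by
  classical
  set K := Submodule.span ℝ (Set.range fun l => N l x) with hK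
  set w := fderiv ℝ S x (v x) with hw
  have hNK : ∀ l, N l x ∈ K := fun l => Submodule.subset_span ⟨l, rfl⟩
  have hTmem : T ∈ Kᗮ := by rw [hT]; exact Submodule.sub_starProjection_mem_orthogonal w
  have hTN : ∀ l, ⟪T, N l x⟫ = 0 := fun l =>
    (Submodule.mem_orthogonal' K T).1 hTmem _ (hNK l)
  set Bp := (Submodule.orthogonalProjection K (fderiv ℝ v x T) : E) with hBp
  have hBinner : ∀ l, ⟪Bp, N l x⟫ = ⟪fderiv ℝ v x T, N l x⟫ := by
    intro l
    have hm := Submodule.sub_starProjection_mem_orthogonal (K := K) (fderiv ℝ v x T)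
    have h0 : ⟪fderiv ℝ v x T - Bp, N l x⟫ = 0 :=
      (Submodule.mem_orthogonal' K _).1 hm _ (hNK l)
    rw [inner_sub_left] at h0
    linarith
  -- Weingarten from the everywhere-tangency of v
  have hW : ∀ l (ξ : E), ⟪fderiv ℝ v x ξ, N l x⟫ = -⟪v x, fderiv ℝ (N l) x ξ⟫ := by
    intro l ξ
    have hzero : (fun y => ⟪v y, N l y⟫) = fun _ => (0 : ℝ) := funext fun y => hvt y l
    have h1 : fderiv ℝ (fun y => ⟪v y, N l y⟫) x ξ = 0 := by
      rw [hzero]; simp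
    rw [fderiv_inner_apply ℝ (hvdiff x) (hNdiff l x)] at h1
    linarith
  -- the key differentiated identity
  have dS : DifferentiableAt ℝ S x := hSdiff x
  have dN : ∀ l, DifferentiableAt ℝ (N l) x := fun l => hNdiff l x
  have dr : ∀ l : Fin m,
      DifferentiableAt ℝ (fun y => ⟪S y, N l y⟫ * (⟪N l y, N l y⟫)⁻¹) x :=
    fun l => ((dS.inner ℝ (dN l))).mul (((dN l).inner ℝ (dN l)).inv (hNne x hx l))
  have dTerm : ∀ l : Fin m,
      DifferentiableAt ℝ (fun y => ⟪T, N l y⟫ * (⟪S y, N l y⟫ * (⟪N l y, N l y⟫)⁻¹)) x :=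
    fun l => ((differentiableAt_const T).inner ℝ (dN l)).mul (dr l)
  have dSum : DifferentiableAt ℝ
      (fun y => ∑ l, ⟪T, N l y⟫ * (⟪S y, N l y⟫ * (⟪N l y, N l y⟫)⁻¹)) x :=
    DifferentiableAt.fun_sum (fun l _ => dTerm l)
  have d1 : DifferentiableAt ℝ (fun y => ⟪S y, T⟫) x := dS.inner ℝ (differentiableAt_const T)
  have hg0 : ∀ y ∈ M,
      ⟪S y, T⟫ - ∑ l, ⟪T, N l y⟫ * (⟪S y, N l y⟫ * (⟪N l y, N l y⟫)⁻¹) = 0 := by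
    intro y hy
    have hexp := orth_expand (fun l => N l y) (horth y hy) (hNne y hy) (hSmem y hy)
    have h1 : ⟪S y, T⟫ = ∑ l, ⟪T, N l y⟫ * (⟪S y, N l y⟫ * (⟪N l y, N l y⟫)⁻¹) := by
      conv_lhs => rw [hexp]
      rw [sum_inner]
      refine Finset.sum_congr rfl fun l _ => ?_
      rw [real_inner_smul_left, real_inner_comm (N l y) T, div_eq_mul_inv]
      ring
    rw [h1, sub_self]
  have hkl := kl _ (d1.fun_sub dSum) hg0
  rw [fderiv_fun_sub d1 dSum, ContinuousLinearMap.sub_apply,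
    fderiv_fun_sum (fun l _ => dTerm l), ContinuousLinearMap.sum_apply] at hkl
  have hfirst : fderiv ℝ (fun y => ⟪S y, T⟫) x (v x) = ⟪w, T⟫ := by
    rw [fderiv_inner_apply ℝ dS (differentiableAt_const T)]
    simp [hw]
  have hterm : ∀ l : Fin m,
      fderiv ℝ (fun y => ⟪T, N l y⟫ * (⟪S y, N l y⟫ * (⟪N l y, N l y⟫)⁻¹)) x (v x) =
        (⟪S x, N l x⟫ * (⟪N l x, N l x⟫)⁻¹) * ⟪T, fderiv ℝ (N l) x (v x)⟫ := by
    intro l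
    rw [fderiv_fun_mul ((differentiableAt_const T).inner ℝ (dN l)) (dr l)]
    have hb : fderiv ℝ (fun y => ⟪T, N l y⟫) x (v x) = ⟪T, fderiv ℝ (N l) x (v x)⟫ := by
      rw [fderiv_inner_apply ℝ (differentiableAt_const T) (dN l)]
      simp
    simp only [ContinuousLinearMap.add_apply, ContinuousLinearMap.smul_apply, smul_eq_mul]
    rw [hb]
    have hTNl : ⟪T, N l x⟫ = 0 := hTN l
    simp [hTNl]
  rw [hfirst] at hkl
  have hkl2 : ⟪w, T⟫ =
      ∑ l, (⟪S x, N l x⟫ * (⟪N l x, N l x⟫)⁻¹) * ⟪T, fderiv ℝ (N l) x (v x)⟫ := by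
    have := sub_eq_zero.1 hkl
    rw [this]
    exact Finset.sum_congr rfl fun l _ => hterm l
  -- rewrite each Hessian term through Weingarten
  have hHessW : ∀ l, ⟪T, fderiv ℝ (N l) x (v x)⟫ = -⟪Bp, N l x⟫ := by
    intro l
    have h1 : ⟪T, fderiv ℝ (N l) x (v x)⟫ = ⟪v x, fderiv ℝ (N l) x T⟫ := by
      rw [real_inner_comm, hsymm l (v x) T, real_inner_comm]
    rw [h1]
    linarith [hW l T, hBinner l]
  have hSx := orth_expand (fun l => N l x) (horth x hx) (hNne x hx) (hSmem x hx)
  have hwT : ⟪w, T⟫ = -⟪Bp, S x⟫ := by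
    rw [hkl2]
    have : ⟪Bp, S x⟫ = ∑ l, (⟪S x, N l x⟫ * (⟪N l x, N l x⟫)⁻¹) * ⟪Bp, N l x⟫ := by
      conv_lhs => rw [hSx]
      rw [inner_sum]
      exact Finset.sum_congr rfl fun l _ => by
        rw [real_inner_smul_right, div_eq_mul_inv]
    rw [this, ← Finset.sum_neg_distrib]
    exact Finset.sum_congr rfl fun l _ => by rw [hHessW l]; ring
  -- assemble
  have hTT : ⟪T, T⟫ = ⟪w, T⟫ := by
    have hwt : w - T = (Submodule.orthogonalProjection K w : E) := by rw [hT, sub_sub_cancel]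
    have h0 : ⟪w - T, T⟫ = 0 := by
      rw [hwt]
      exact (Submodule.mem_orthogonal K T).1 hTmem _ (Submodule.coe_mem _)
    rw [inner_sub_left] at h0
    linarith
  have hCS : ⟪T, T⟫ ≤ ‖Bp‖ * ‖S x‖ := by
    rw [hTT, hwT]
    calc -⟪Bp, S x⟫ = ⟪-Bp, S x⟫ := by rw [inner_neg_left]
      _ ≤ ‖-Bp‖ * ‖S x‖ := real_inner_le_norm _ _
      _ = ‖Bp‖ * ‖S x‖ := by rw [norm_neg]
  have hBnn : (0:ℝ) ≤ C₂ * ‖T‖ * ‖v x‖ := le_trans (norm_nonneg _) hBnorm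
  have hfinal : ‖T‖ ^ 2 ≤ (C₂ * ‖T‖ * ‖v x‖) * (C₂ * ‖v x‖ * ‖v x‖) := by
    rw [← real_inner_self_eq_norm_sq]
    exact le_trans hCS (mul_le_mul hBnorm hSnorm (norm_nonneg _) hBnn)
  have hR : (0:ℝ) ≤ C₂ ^ 2 * ‖v x‖ ^ 3 := by positivity
  rcases eq_or_lt_of_le (norm_nonneg T) with h0 | h0
  · rw [← h0]; exact hR
  · have hmul : ‖T‖ * ‖T‖ ≤ (C₂ ^ 2 * ‖v x‖ ^ 3) * ‖T‖ := by nlinarith [hfinal]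
    exact le_of_mul_le_mul_right hmul h0

/-- Under the standing assumptions (`‖∇h^l‖ ≥ L₁`, `‖∇²h^l(w,w')‖ ≤ L₂‖w‖‖w'‖`,
`‖∇³h^l(w,w,w)‖ ≤ L₃‖w‖³`, pairwise-orthogonal gradients on `M`, and
`‖Π(u,v)‖ ≤ C₂‖u‖‖v‖`), for a geodesic tangent field `v` the tangential
component of `∇_v Π(v,v)` satisfies `‖(∇_v Π(v,v))^⊤‖ ≤ C₂² ‖v‖³`. -/
theorem stmt15 {n m : ℕ}
    (h : EuclideanSpace ℝ (Fin (n + m)) → Fin m → ℝ)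
    (hsmooth : ∀ l, ContDiff ℝ (⊤ : ℕ∞) fun x => h x l)
    (M : Set (EuclideanSpace ℝ (Fin (n + m)))) (hM : M = {x | ∀ l, h x l = 0})
    (L₁ L₂ L₃ C₂ : ℝ) (hL₁ : 0 < L₁)
    (hgrad : ∀ x ∈ M, ∀ l, L₁ ≤ ‖gradient (fun y => h y l) x‖)
    (hHess : ∀ (x w w' : EuclideanSpace ℝ (Fin (n + m))) (l : Fin m),
      |⟪fderiv ℝ (gradient fun y => h y l) x w, w'⟫| ≤ L₂ * ‖w‖ * ‖w'‖)
    (hThird : ∀ (x w : EuclideanSpace ℝ (Fin (n + m))) (l : Fin m),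
      ‖iteratedFDeriv ℝ 3 (fun y => h y l) x ![w, w, w]‖ ≤ L₃ * ‖w‖ ^ 3)
    (horth : ∀ x ∈ M, ∀ l l' : Fin m, l ≠ l' →
      ⟪gradient (fun y => h y l) x, gradient (fun y => h y l') x⟫ = 0)
    -- `SFF x` is the second fundamental form at `x`: for tangent fields `u, w`
    -- it is the normal component of the Euclidean directional derivative `∇_u w`
    (SFF : EuclideanSpace ℝ (Fin (n + m)) → EuclideanSpace ℝ (Fin (n + m)) →
      EuclideanSpace ℝ (Fin (n + m)) → EuclideanSpace ℝ (Fin (n + m)))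
    (hSFFdef : ∀ (u w : EuclideanSpace ℝ (Fin (n + m)) → EuclideanSpace ℝ (Fin (n + m))),
      Differentiable ℝ w →
      (∀ y l, ⟪u y, gradient (fun z => h z l) y⟫ = 0) →
      (∀ y l, ⟪w y, gradient (fun z => h z l) y⟫ = 0) →
      ∀ x ∈ M, SFF x (u x) (w x) =
        (Submodule.orthogonalProjection
          (Submodule.span ℝ (Set.range fun l => gradient (fun y => h y l) x))
          (fderiv ℝ w x (u x)) : EuclideanSpace ℝ (Fin (n + m))))
    (hSFFbound : ∀ x ∈ M, ∀ u w, ‖SFF x u w‖ ≤ C₂ * ‖u‖ * ‖w‖)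
    -- `v` is a tangent vector field which is geodesic: `(∇_v v)^⊤ = 0`
    (v : EuclideanSpace ℝ (Fin (n + m)) → EuclideanSpace ℝ (Fin (n + m)))
    (hvdiff : Differentiable ℝ v)
    (hvt : ∀ y l, ⟪v y, gradient (fun z => h z l) y⟫ = 0)
    (hgeo : ∀ x ∈ M, fderiv ℝ v x (v x) = SFF x (v x) (v x))
    (hSFFvdiff : Differentiable ℝ fun y => SFF y (v y) (v y))
    (x : EuclideanSpace ℝ (Fin (n + m))) (hx : x ∈ M) :
    ‖fderiv ℝ (fun y => SFF y (v y) (v y)) x (v x)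
        - (Submodule.orthogonalProjection
            (Submodule.span ℝ (Set.range fun l => gradient (fun y => h y l) x))
            (fderiv ℝ (fun y => SFF y (v y) (v y)) x (v x)) :
          EuclideanSpace ℝ (Fin (n + m)))‖
      ≤ C₂ ^ 2 * ‖v x‖ ^ 3 := by
  classical
  have hx0 : ∀ l, h x l = 0 := by rw [hM] at hx; exact hx
  have hxM : x ∈ M := hx
  -- differentiability of the gradient fields
  have hDles : ∀ l, ContDiff ℝ (⊤ : ℕ∞) (fun y => fderiv ℝ (fun z => h z l) y) :=
    fun l => (hsmooth l).fderiv_right (by simp)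
  have hNdiff : ∀ l, Differentiable ℝ (fun y => gradient (fun z => h z l) y) := by
    intro l
    have : (fun y => gradient (fun z => h z l) y) = fun y =>
        (InnerProductSpace.toDual ℝ (EuclideanSpace ℝ (Fin (n + m)))).symm
          (fderiv ℝ (fun z => h z l) y) := rfl
    rw [this]
    exact ((InnerProductSpace.toDual ℝ
      (EuclideanSpace ℝ (Fin (n + m)))).symm.toContinuousLinearEquiv.toContinuousLinearMap
      ).differentiable.comp ((hDles l).differentiable (by simp))
  -- relation between gradient and fderiv
  have hgradf : ∀ (y ξ : EuclideanSpace ℝ (Fin (n + m))) (l : Fin m),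
      ⟪gradient (fun z => h z l) y, ξ⟫ = fderiv ℝ (fun z => h z l) y ξ := by
    intro y ξ l
    exact InnerProductSpace.toDual_symm_apply
  -- symmetry of the Hessian of each h(·, l)
  have hsymm : ∀ l (a b : EuclideanSpace ℝ (Fin (n + m))),
      ⟪fderiv ℝ (fun y => gradient (fun z => h z l) y) x a, b⟫ =
      ⟪fderiv ℝ (fun y => gradient (fun z => h z l) y) x b, a⟫ := by
    intro l a b
    have hf' : ∀ y, HasFDerivAt (fun z => h z l) (fderiv ℝ (fun z => h z l) y) y :=
      fun y => (((hsmooth l).differentiable (by simp)) y).hasFDerivAt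
    have hD : HasFDerivAt (fun y => fderiv ℝ (fun z => h z l) y)
        (fderiv ℝ (fun y => fderiv ℝ (fun z => h z l) y) x) x :=
      (((hDles l).differentiable (by simp)) x).hasFDerivAt
    have hsec := second_derivative_symmetric hf' hD
    -- identify ⟪Hess ξ, b⟫ with the second derivative
    have key : ∀ (ξ b : EuclideanSpace ℝ (Fin (n + m))),
        ⟪fderiv ℝ (fun y => gradient (fun z => h z l) y) x ξ, b⟫ =
        fderiv ℝ (fun y => fderiv ℝ (fun z => h z l) y) x ξ b := by
      intro ξ b
      have heq : (fun y => ⟪gradient (fun z => h z l) y, b⟫) =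
          fun y => fderiv ℝ (fun z => h z l) y b :=
        funext fun y => hgradf y b l
      have h1 : fderiv ℝ (fun y => ⟪gradient (fun z => h z l) y, b⟫) x ξ =
          ⟪fderiv ℝ (fun y => gradient (fun z => h z l) y) x ξ, b⟫ := by
        rw [fderiv_inner_apply ℝ (hNdiff l x) (differentiableAt_const b)]
        simp
      have h2 : fderiv ℝ (fun y => fderiv ℝ (fun z => h z l) y b) x ξ =
          fderiv ℝ (fun y => fderiv ℝ (fun z => h z l) y) x ξ b := by
        have hcomp := ((ContinuousLinearMap.apply ℝ ℝ b).hasFDerivAt.comp x hD).fderiv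
        rw [show (fun y => fderiv ℝ (fun z => h z l) y b) =
          (ContinuousLinearMap.apply ℝ ℝ b) ∘ (fun y => fderiv ℝ (fun z => h z l) y) from rfl,
          hcomp]
        rfl
      rw [← h1, heq, h2]
    rw [key a b, key b a, hsec a b]
  -- nonvanishing of the gradients on M
  have hNne : ∀ y ∈ M, ∀ l,
      ⟪gradient (fun z => h z l) y, gradient (fun z => h z l) y⟫ ≠ 0 := by
    intro y hy l hc
    have hne : gradient (fun z => h z l) y ≠ 0 := by
      intro h0
      have := hgrad y hy l
      rw [h0, norm_zero] at this
      linarith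
    exact hne (inner_self_eq_zero.1 hc)
  -- the key vanishing lemma specialised to x and v x
  have klx : ∀ g : EuclideanSpace ℝ (Fin (n + m)) → ℝ, DifferentiableAt ℝ g x →
      (∀ y ∈ M, g y = 0) → fderiv ℝ g x (v x) = 0 := by
    intro g hg hg0
    have hfC : ContDiff ℝ (⊤ : ℕ∞) (fun y (l : Fin m) => h y l) := contDiff_pi.2 hsmooth
    have hfx : (fun l : Fin m => h x l) = 0 := funext fun l => hx0 l
    have hfderiv : ∀ (ξ : EuclideanSpace ℝ (Fin (n + m))) (l : Fin m),
        fderiv ℝ (fun y (l : Fin m) => h y l) x ξ l = fderiv ℝ (fun z => h z l) x ξ := by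
      intro ξ l
      rw [fderiv_pi (fun i => ((hsmooth i).differentiable (by simp)) x)]
      rfl
    have hsurj : Function.Surjective ⇑(fderiv ℝ (fun y (l : Fin m) => h y l) x) := by
      intro c
      refine ⟨∑ k, (c k / ⟪gradient (fun z => h z k) x, gradient (fun z => h z k) x⟫) •
        gradient (fun z => h z k) x, funext fun l => ?_⟩
      rw [hfderiv, ← hgradf x _ l, inner_sum]
      rw [Finset.sum_eq_single l]
      · rw [real_inner_smul_right, div_mul_cancel₀ _ (hNne x hxM l)]
      · intro k _ hkl
        rw [real_inner_smul_right, horth x hxM l k (Ne.symm hkl), mul_zero]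
      · intro hl; exact absurd (Finset.mem_univ l) hl
    have hvker : fderiv ℝ (fun y (l : Fin m) => h y l) x (v x) = 0 := by
      funext l
      rw [hfderiv, ← hgradf x _ l, real_inner_comm]
      exact hvt x l
    exact kl_vanish (fun y (l : Fin m) => h y l) hfC hfx hsurj hvker g hg
      (fun y hy => hg0 y (by rw [hM]; exact fun l => congrFun hy l))
  -- membership of the second fundamental form in the normal space
  have hSmem : ∀ y ∈ M, SFF y (v y) (v y) ∈
      Submodule.span ℝ (Set.range fun l => gradient (fun z => h z l) y) := by
    intro y hy
    rw [hSFFdef v v hvdiff hvt hvt y hy]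
    exact Submodule.coe_mem _
  -- abbreviate the tangential component
  set T := fderiv ℝ (fun y => SFF y (v y) (v y)) x (v x)
      - (Submodule.orthogonalProjection
          (Submodule.span ℝ (Set.range fun l => gradient (fun y => h y l) x))
          (fderiv ℝ (fun y => SFF y (v y) (v y)) x (v x)) :
        EuclideanSpace ℝ (Fin (n + m))) with hTdef
  have hTmem : T ∈ (Submodule.span ℝ
      (Set.range fun l => gradient (fun y => h y l) x))ᗮ := by
    rw [hTdef]
    exact Submodule.sub_starProjection_mem_orthogonal _
  -- bound on the normal component of ∇_{v x} of a tangent extension of T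
  have hBnorm : ‖(Submodule.orthogonalProjection
      (Submodule.span ℝ (Set.range fun l => gradient (fun y => h y l) x))
      (fderiv ℝ v x T) : EuclideanSpace ℝ (Fin (n + m)))‖ ≤ C₂ * ‖T‖ * ‖v x‖ := by
    have hut : ∀ y l, ⟪T - (Submodule.orthogonalProjection
        (Submodule.span ℝ (Set.range fun l => gradient (fun z => h z l) y)) T :
          EuclideanSpace ℝ (Fin (n + m))), gradient (fun z => h z l) y⟫ = 0 := by
      intro y l
      exact (Submodule.mem_orthogonal' _ _).1
        (Submodule.sub_starProjection_mem_orthogonal T) _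
        (Submodule.subset_span ⟨l, rfl⟩)
    have hudef := hSFFdef (fun y => T - (Submodule.orthogonalProjection
        (Submodule.span ℝ (Set.range fun l => gradient (fun z => h z l) y)) T :
          EuclideanSpace ℝ (Fin (n + m)))) v hvdiff hut hvt x hxM
    have hux : T - (Submodule.orthogonalProjection
        (Submodule.span ℝ (Set.range fun l => gradient (fun z => h z l) x)) T :
          EuclideanSpace ℝ (Fin (n + m))) = T := by
      rw [Submodule.orthogonalProjection_mem_subspace_orthogonalComplement_eq_zero hTmem]
      simp
    simp only [] at hudef
    rw [hux] at hudef
    rw [← hudef]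
    exact hSFFbound x hxM T (v x)
  exact tangential_bound (fun l y => gradient (fun z => h z l) y) M hxM hNdiff hsymm horth
    hNne v hvdiff hvt klx (fun y => SFF y (v y) (v y)) hSFFvdiff hSmem T hTdef C₂
    hBnorm (hSFFbound x hxM (v x) (v x))
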